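/- arXiv:1810.03053 — 6 statements merged into one kernel-verified Lean document; each statement's English description precedes it below -/
import Mathlib

section
/- Fix a ({b_n},{A_n},0)-Sequence and an integer n_0 ≥ 2. Suppose that the set of positive integers that admit a legal decomposition using only terms from the first n_0 − 1 bins is exactly {1, 2, ..., k}. Then every term of the sequence lying in bin n_0 or in any later bin is divisible by k + 1. -/
/-- `binStart b n` is the index of the first term of the (0-indexed) `n`-th bin,
when bin `m` consists of `b m` consecutive terms of the sequence. -/
def binStart (b : ℕ → ℕ) (n : ℕ) : ℕ := ∑ m ∈ Finset.range n, b m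

/-- `binOf b i` is the (0-indexed) bin containing the term with index `i`. -/
noncomputable def binOf (b : ℕ → ℕ) (i : ℕ) : ℕ := sInf {n : ℕ | i < binStart b (n + 1)}

/-- A selection of indices `S` is legal if, for every bin `n`, the number of selected
indices lying in bin `n` belongs to `A n`. -/
def IsLegalSel (b : ℕ → ℕ) (A : ℕ → Set ℕ) (S : Finset ℕ) : Prop :=
  ∀ n : ℕ, (S.filter (fun i => binOf b i = n)).card ∈ A n

/-- The `({b_n},{A_n},0)`-Sequence: the `k`-th term (0-indexed) is the least positive
integer which is not legally decomposable using the first `k` terms. -/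
noncomputable def zseq (b : ℕ → ℕ) (A : ℕ → Set ℕ) : ℕ → ℕ
  | k => sInf {x : ℕ | 0 < x ∧ ¬ ∃ S : Finset ℕ, S ⊆ Finset.range k ∧ S.Nonempty ∧
      IsLegalSel b A S ∧ (∑ i ∈ S, if h : i < k then zseq b A i else 0) = x}
  termination_by k => k
  decreasing_by exact h

section Aux

variable (b : ℕ → ℕ) (A : ℕ → Set ℕ)

lemma binStart_mono : Monotone (binStart b) := fun _ _ h =>
  Finset.sum_le_sum_of_subset (Finset.range_subset_range.2 h)

lemma lt_binStart_succ_self (hb : ∀ n, 0 < b n) (i : ℕ) : i < binStart b (i + 1) := by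
  have h : i + 1 ≤ ∑ m ∈ Finset.range (i + 1), b m := by
    calc i + 1 = ∑ _m ∈ Finset.range (i + 1), 1 := by simp
    _ ≤ _ := Finset.sum_le_sum fun m _ => hb m
  simpa [binStart] using h

lemma binOf_le_iff (hb : ∀ n, 0 < b n) (i n : ℕ) :
    binOf b i ≤ n ↔ i < binStart b (n + 1) := by
  have hne : {m : ℕ | i < binStart b (m + 1)}.Nonempty :=
    ⟨i, lt_binStart_succ_self b hb i⟩
  constructor
  · intro h
    have hm := Nat.sInf_mem hne
    calc i < binStart b (binOf b i + 1) := hm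
    _ ≤ binStart b (n + 1) := binStart_mono b (by omega)
  · intro h
    exact Nat.sInf_le h

lemma binOf_lt_iff (hb : ∀ n, 0 < b n) (i m : ℕ) (hm : 1 ≤ m) :
    binOf b i < m ↔ i < binStart b m := by
  rcases m with _ | m
  · omega
  · rw [Nat.lt_succ_iff, binOf_le_iff b hb]

lemma sum_dite_eq (m : ℕ) (S : Finset ℕ) (hS : S ⊆ Finset.range m) :
    (∑ i ∈ S, if h : i < m then zseq b A i else 0) = ∑ i ∈ S, zseq b A i :=
  Finset.sum_congr rfl fun i hi => dif_pos (Finset.mem_range.1 (hS hi))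

lemma zseq_def (m : ℕ) : zseq b A m = sInf {x : ℕ | 0 < x ∧ ¬ ∃ S : Finset ℕ,
    S ⊆ Finset.range m ∧ S.Nonempty ∧ IsLegalSel b A S ∧
    (∑ i ∈ S, if h : i < m then zseq b A i else 0) = x} := by
  rw [zseq]

lemma zseq_mem (m : ℕ) : 0 < zseq b A m ∧ ¬ ∃ S : Finset ℕ,
    S ⊆ Finset.range m ∧ S.Nonempty ∧ IsLegalSel b A S ∧
    (∑ i ∈ S, if h : i < m then zseq b A i else 0) = zseq b A m := by
  have hne : {x : ℕ | 0 < x ∧ ¬ ∃ S : Finset ℕ,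
      S ⊆ Finset.range m ∧ S.Nonempty ∧ IsLegalSel b A S ∧
      (∑ i ∈ S, if h : i < m then zseq b A i else 0) = x}.Nonempty := by
    refine ⟨∑ j ∈ Finset.range m, zseq b A j + 1, ⟨by omega, ?_⟩⟩
    rintro ⟨S, h1, _h2, _h3, h4⟩
    rw [sum_dite_eq b A m S h1] at h4
    have hle : ∑ i ∈ S, zseq b A i ≤ ∑ j ∈ Finset.range m, zseq b A j :=
      Finset.sum_le_sum_of_subset h1
    omega
  have hmem : zseq b A m ∈ {x : ℕ | 0 < x ∧ ¬ ∃ S : Finset ℕ,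
      S ⊆ Finset.range m ∧ S.Nonempty ∧ IsLegalSel b A S ∧
      (∑ i ∈ S, if h : i < m then zseq b A i else 0) = x} := by
    rw [zseq_def b A m]
    exact Nat.sInf_mem hne
  exact hmem

variable {b A} in
lemma legal_low (hb : ∀ n, 0 < b n) (h01 : ∀ n, ({0, 1} : Set ℕ) ⊆ A n)
    {M : ℕ} (hM : 1 ≤ M) {S : Finset ℕ} (hS : IsLegalSel b A S) :
    IsLegalSel b A (S.filter (fun j => j < binStart b M)) := by
  intro n
  rw [Finset.filter_filter]
  by_cases hn : n < M
  · have heq : S.filter (fun j => j < binStart b M ∧ binOf b j = n)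
        = S.filter (fun i => binOf b i = n) := by
      apply Finset.filter_congr
      intro j _
      constructor
      · tauto
      · intro hj
        refine ⟨?_, hj⟩
        rw [← binOf_lt_iff b hb j M hM, hj]
        exact hn
    rw [heq]
    exact hS n
  · have heq : S.filter (fun j => j < binStart b M ∧ binOf b j = n) = ∅ := by
      apply Finset.filter_false_of_mem
      intro j _
      rintro ⟨hj1, hj2⟩
      rw [← binOf_lt_iff b hb j M hM] at hj1
      omega
    rw [heq]
    exact h01 n (Or.inl rfl)

variable {b A} in
lemma legal_high (hb : ∀ n, 0 < b n) (h01 : ∀ n, ({0, 1} : Set ℕ) ⊆ A n)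
    {M : ℕ} (hM : 1 ≤ M) {S : Finset ℕ} (hS : IsLegalSel b A S) :
    IsLegalSel b A (S.filter (fun j => ¬ j < binStart b M)) := by
  intro n
  rw [Finset.filter_filter]
  by_cases hn : M ≤ n
  · have heq : S.filter (fun j => ¬ j < binStart b M ∧ binOf b j = n)
        = S.filter (fun i => binOf b i = n) := by
      apply Finset.filter_congr
      intro j _
      constructor
      · tauto
      · intro hj
        refine ⟨?_, hj⟩
        rw [← binOf_lt_iff b hb j M hM, hj]
        omega
    rw [heq]
    exact hS n
  · have heq : S.filter (fun j => ¬ j < binStart b M ∧ binOf b j = n) = ∅ := by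
      apply Finset.filter_false_of_mem
      intro j _
      rintro ⟨hj1, hj2⟩
      rw [← binOf_lt_iff b hb j M hM] at hj1
      omega
    rw [heq]
    exact h01 n (Or.inl rfl)

variable {b A} in
lemma legal_union (hb : ∀ n, 0 < b n) (h01 : ∀ n, ({0, 1} : Set ℕ) ⊆ A n)
    {M : ℕ} (hM : 1 ≤ M) {S₁ S₂ : Finset ℕ}
    (hS₁lt : ∀ j ∈ S₁, j < binStart b M) (hS₂ge : ∀ j ∈ S₂, binStart b M ≤ j)
    (h₁ : IsLegalSel b A S₁) (h₂ : IsLegalSel b A S₂) :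
    IsLegalSel b A (S₁ ∪ S₂) := by
  intro n
  rw [Finset.filter_union]
  by_cases hn : n < M
  · have heq : S₂.filter (fun i => binOf b i = n) = ∅ := by
      apply Finset.filter_false_of_mem
      intro j hj hj2
      have hge : ¬ binOf b j < M := by
        rw [binOf_lt_iff b hb j M hM]
        have := hS₂ge j hj
        omega
      omega
    rw [heq, Finset.union_empty]
    exact h₁ n
  · have heq : S₁.filter (fun i => binOf b i = n) = ∅ := by
      apply Finset.filter_false_of_mem
      intro j hj hj2
      have hlt := hS₁lt j hj
      rw [← binOf_lt_iff b hb j M hM] at hlt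
      omega
    rw [heq, Finset.empty_union]
    exact h₂ n

end Aux

/-- If the set of positive integers legally decomposable using only the first `n₀ − 1`
bins (paper indexing: bins `1, …, n₀ − 1`) is exactly `{1, …, k}`, then every term of
the sequence lying in bin `n₀` or later is divisible by `k + 1`. -/
theorem divisibility_of_later_terms (b : ℕ → ℕ) (A : ℕ → Set ℕ)
    (hb : ∀ n, 0 < b n) (hA : ∀ n, A n ⊆ Set.Iic (b n)) (h01 : ∀ n, ({0, 1} : Set ℕ) ⊆ A n)
    (n₀ k : ℕ) (hn₀ : 2 ≤ n₀)
    (hk : {x : ℕ | ∃ S : Finset ℕ, S ⊆ Finset.range (binStart b (n₀ - 1)) ∧ S.Nonempty ∧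
        IsLegalSel b A S ∧ ∑ i ∈ S, zseq b A i = x} = Set.Icc 1 k) :
    ∀ i : ℕ, binStart b (n₀ - 1) ≤ i → (k + 1) ∣ zseq b A i := by
  set N := binStart b (n₀ - 1) with hNdef
  have hM : 1 ≤ n₀ - 1 := by omega
  have hk₁ : ∀ r, 1 ≤ r → r ≤ k → ∃ S : Finset ℕ, S ⊆ Finset.range N ∧ S.Nonempty ∧
      IsLegalSel b A S ∧ ∑ i ∈ S, zseq b A i = r := by
    intro r h1 h2
    have hmem : r ∈ Set.Icc 1 k := ⟨h1, h2⟩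
    rw [← hk] at hmem
    exact hmem
  have hk₂ : ∀ S : Finset ℕ, S ⊆ Finset.range N → S.Nonempty → IsLegalSel b A S →
      1 ≤ ∑ i ∈ S, zseq b A i ∧ ∑ i ∈ S, zseq b A i ≤ k := by
    intro S h1 h2 h3
    have hmem : (∑ i ∈ S, zseq b A i) ∈ Set.Icc 1 k := by
      rw [← hk]; exact ⟨S, h1, h2, h3, rfl⟩
    exact hmem
  intro i
  induction i using Nat.strong_induction_on with
  | _ i ih =>
    intro hi
    obtain ⟨hpos, hnd⟩ := zseq_mem b A i
    by_contra hdvd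
    set x := zseq b A i with hx
    set r := x % (k + 1) with hr
    have hrlt : r < k + 1 := Nat.mod_lt x (by omega)
    have hrne : r ≠ 0 := fun h => hdvd (Nat.dvd_of_mod_eq_zero h)
    have hrx : r ≤ x := Nat.mod_le x (k + 1)
    set y := x - r with hydef
    have hy : y = (k + 1) * (x / (k + 1)) := by
      have hmd := Nat.mod_add_div x (k + 1)
      omega
    have hydvd : (k + 1) ∣ y := ⟨_, hy⟩
    by_cases hy0 : y = 0
    · -- x = r ∈ [1, k], so x is decomposable: contradiction
      have hxr : x = r := by omega
      obtain ⟨S, hS1, hS2, hS3, hS4⟩ := hk₁ r (by omega) (by omega)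
      apply hnd
      have hSi : S ⊆ Finset.range i := hS1.trans (Finset.range_subset_range.2 hi)
      exact ⟨S, hSi, hS2, hS3, by rw [sum_dite_eq b A i S hSi, hS4, ← hxr]⟩
    · have hylt : y < x := by omega
      have hyd : ∃ S, S ⊆ Finset.range i ∧ S.Nonempty ∧ IsLegalSel b A S ∧
          ∑ j ∈ S, zseq b A j = y := by
        by_contra hc
        have hle : zseq b A i ≤ y := by
          rw [zseq_def b A i]
          apply Nat.sInf_le
          refine ⟨by omega, ?_⟩
          rintro ⟨S, h1, h2, h3, h4⟩
          exact hc ⟨S, h1, h2, h3, by rw [← sum_dite_eq b A i S h1]; exact h4⟩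
        omega
      obtain ⟨S, hS1, hS2, hS3, hS4⟩ := hyd
      set S₁ := S.filter (fun j => j < N) with hS₁def
      set S₂ := S.filter (fun j => ¬ j < N) with hS₂def
      have hsplit : ∑ j ∈ S₁, zseq b A j + ∑ j ∈ S₂, zseq b A j = y := by
        rw [hS₁def, hS₂def, Finset.sum_filter_add_sum_filter_not S (fun j => j < N), hS4]
      have hS₂dvd : (k + 1) ∣ ∑ j ∈ S₂, zseq b A j := by
        apply Finset.dvd_sum
        intro j hj
        rw [hS₂def, Finset.mem_filter] at hj
        exact ih j (Finset.mem_range.1 (hS1 hj.1)) (by omega)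
      have hS₁sub : S₁ ⊆ Finset.range N := by
        intro j hj
        rw [hS₁def, Finset.mem_filter] at hj
        exact Finset.mem_range.2 hj.2
      have hS₁0 : ∑ j ∈ S₁, zseq b A j = 0 := by
        rcases Finset.eq_empty_or_nonempty S₁ with h | h
        · simp [h]
        · exfalso
          have hrng := hk₂ S₁ hS₁sub h (legal_low hb h01 hM hS3)
          have hdvd1 : (k + 1) ∣ ∑ j ∈ S₁, zseq b A j := by
            have := Nat.dvd_sub hydvd hS₂dvd
            have heq : y - ∑ j ∈ S₂, zseq b A j = ∑ j ∈ S₁, zseq b A j := by omega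
            rwa [heq] at this
          have := Nat.le_of_dvd (by omega) hdvd1
          omega
      have hyS₂ : ∑ j ∈ S₂, zseq b A j = y := by omega
      obtain ⟨T, hT1, hT2, hT3, hT4⟩ := hk₁ r (by omega) (by omega)
      apply hnd
      have hTi : T ⊆ Finset.range i := hT1.trans (Finset.range_subset_range.2 hi)
      have hS₂i : S₂ ⊆ Finset.range i := (Finset.filter_subset _ S).trans hS1
      have hUi : T ∪ S₂ ⊆ Finset.range i := Finset.union_subset hTi hS₂i
      have hdisj : Disjoint T S₂ := by
        rw [Finset.disjoint_left]
        intro j hjT hjS₂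
        have h1 := Finset.mem_range.1 (hT1 hjT)
        rw [hS₂def, Finset.mem_filter] at hjS₂
        omega
      refine ⟨T ∪ S₂, hUi, ?_, ?_, ?_⟩
      · exact hT2.mono Finset.subset_union_left
      · apply legal_union hb h01 hM (S₁ := T) (S₂ := S₂)
        · intro j hj; exact Finset.mem_range.1 (hT1 hj)
        · intro j hj; rw [hS₂def, Finset.mem_filter] at hj; omega
        · exact hT3
        · exact legal_high hb h01 hM hS3
      · rw [sum_dite_eq b A i _ hUi, Finset.sum_union hdisj, hT4, hyS₂]
        omega
end

section
/- Fix a set A of nonnegative integers with |A| ≥ 2, with m = max(A) and m' = max(A \ {m}). For each integer b ≥ m, let Y_b be a random variable with P(Y_b = i) = C(b,i)/Σ_{t∈A} C(b,t) for i ∈ A. Then there exist constants c_1, c_2 > 0 and an integer b_0 such that for all b ≥ b_0, c_1·b^{m'−m} ≤ Var(Y_b) ≤ c_2·b^{m'−m}. -/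
/-!
A random variable taking the value `x i` with probability `p i` has variance
`½ ∑_{i,j} p i p j (x i - x j)²`. Once `b ≥ 2 max A`, the binomial weights are increasing
on `A`, so every off-diagonal product `p i p j` is at most `p m p m'`, a product which itself
occurs in the sum; since also `1/|A| ≤ p m ≤ 1`, the variance is
`Θ(p m' / p m) = Θ(C(b,m') / C(b,m))`. Finally `(b/2)^k/k! ≤ C(b,k) ≤ b^k/k!` for `2k ≤ b`,
so this ratio is `Θ(b^(m'-m))`.
-/

open MeasureTheory ProbabilityTheory Finset Nat

theorem sum_sum_mul_sub_sq_eq {ι : Type*} (A : Finset ι) (p x : ι → ℝ)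
    (hp : ∑ i ∈ A, p i = 1) :
    ∑ i ∈ A, ∑ j ∈ A, p i * p j * (x i - x j) ^ 2
      = 2 * ∑ i ∈ A, p i * (x i - ∑ j ∈ A, p j * x j) ^ 2 := by
  set c := ∑ j ∈ A, p j * x j
  calc ∑ i ∈ A, ∑ j ∈ A, p i * p j * (x i - x j) ^ 2
      = ∑ i ∈ A, ∑ j ∈ A, (p i * x i ^ 2 * p j - 2 * (p i * x i) * (p j * x j)
          + p i * (p j * x j ^ 2)) :=
        sum_congr rfl fun i _ => sum_congr rfl fun j _ => by ring
    _ = 2 * ∑ i ∈ A, (p i * x i ^ 2 - 2 * c * (p i * x i) + c ^ 2 * p i) := by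
        simp only [sum_add_distrib, sum_sub_distrib, ← mul_sum, ← sum_mul, hp]
        ring
    _ = 2 * ∑ i ∈ A, p i * (x i - c) ^ 2 := by
        congr 1
        exact sum_congr rfl fun i _ => by ring

theorem pairwiseDisjoint_fiber {Ω ι α : Type*} {X : Ω → α} {A : Finset ι} {x : ι → α}
    (hx : Set.InjOn x A) : (A : Set ι).PairwiseDisjoint fun i => {ω | X ω = x i} :=
  fun i hi _ hj hij => Set.disjoint_left.mpr fun ω hωi hωj =>
    hij (hx hi hj ((hωi : X ω = x i).symm.trans hωj))

section FiniteRange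

variable {Ω ι : Type*} [MeasurableSpace Ω] {μ : Measure Ω} [IsProbabilityMeasure μ]
  {X : Ω → ℝ} {A : Finset ι} {x p : ι → ℝ}

theorem ae_exists_eq_of_sum_eq_one (hX : Measurable X) (hx : Set.InjOn x A)
    (hP : ∀ i ∈ A, μ {ω | X ω = x i} = ENNReal.ofReal (p i)) (hp0 : ∀ i ∈ A, 0 ≤ p i)
    (hp1 : ∑ i ∈ A, p i = 1) : ∀ᵐ ω ∂μ, ∃ i ∈ A, X ω = x i := by
  have hmeas : ∀ i ∈ A, MeasurableSet {ω | X ω = x i} :=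
    fun i _ => hX (measurableSet_singleton _)
  have hfull : μ (⋃ i ∈ A, {ω | X ω = x i}) = 1 := by
    rw [measure_biUnion_finset (pairwiseDisjoint_fiber hx) hmeas, sum_congr rfl hP,
      ← ENNReal.ofReal_sum_of_nonneg hp0, hp1, ENNReal.ofReal_one]
  have hnull :=
    (prob_compl_eq_zero_iff (MeasurableSet.biUnion A.countable_toSet hmeas)).mpr hfull
  filter_upwards [measure_eq_zero_iff_ae_notMem.mp hnull] with ω hω
  simpa using hω

theorem integral_comp_eq_sum (hX : Measurable X) (hx : Set.InjOn x A)
    (hP : ∀ i ∈ A, μ {ω | X ω = x i} = ENNReal.ofReal (p i)) (hp0 : ∀ i ∈ A, 0 ≤ p i)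
    (hp1 : ∑ i ∈ A, p i = 1) (f : ℝ → ℝ) :
    ∫ ω, f (X ω) ∂μ = ∑ i ∈ A, p i * f (x i) := by
  have hmeas : ∀ i, MeasurableSet {ω | X ω = x i} := fun i => hX (measurableSet_singleton _)
  have hsimple : (fun ω => f (X ω)) =ᵐ[μ]
      fun ω => ∑ i ∈ A, Set.indicator {ω | X ω = x i} (fun _ => f (x i)) ω := by
    filter_upwards [ae_exists_eq_of_sum_eq_one hX hx hP hp0 hp1] with ω ⟨i, hi, hωi⟩
    rw [sum_eq_single_of_mem i hi, Set.indicator_of_mem (s := {ω | X ω = x i}) hωi, hωi]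
    intro j hj hji
    exact Set.indicator_of_notMem
      (Set.disjoint_left.mp (pairwiseDisjoint_fiber hx hi hj hji.symm) hωi) _
  rw [integral_congr_ae hsimple,
    integral_finsetSum _ fun i _ => (integrable_const _).indicator (hmeas i)]
  refine sum_congr rfl fun i hi => ?_
  rw [integral_indicator_const _ (hmeas i), measureReal_def, hP i hi,
    ENNReal.toReal_ofReal (hp0 i hi), smul_eq_mul]

theorem variance_eq_sum_sum (hX : Measurable X) (hx : Set.InjOn x A)
    (hP : ∀ i ∈ A, μ {ω | X ω = x i} = ENNReal.ofReal (p i)) (hp0 : ∀ i ∈ A, 0 ≤ p i)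
    (hp1 : ∑ i ∈ A, p i = 1) :
    variance X μ = (∑ i ∈ A, ∑ j ∈ A, p i * p j * (x i - x j) ^ 2) / 2 := by
  have hmean : μ[X] = ∑ j ∈ A, p j * x j := integral_comp_eq_sum hX hx hP hp0 hp1 id
  rw [variance_eq_integral hX.aemeasurable, sum_sum_mul_sub_sq_eq A p x hp1,
    integral_comp_eq_sum hX hx hP hp0 hp1 (fun t => (t - μ[X]) ^ 2), hmean]
  ring

end FiniteRange

theorem Nat.choose_monotoneOn_Iic_half (n : ℕ) : MonotoneOn n.choose (Set.Iic (n / 2)) :=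
  monotoneOn_of_le_succ Set.ordConnected_Iic fun _ _ _ hk =>
    choose_le_succ_of_lt_half_left (Order.succ_le_iff.mp hk)

section ChooseBounds

variable {α : Type*} [Semifield α] [LinearOrder α] [IsStrictOrderedRing α]

theorem Nat.half_pow_div_factorial_le_choose {n k : ℕ} (h : 2 * k ≤ n) :
    ((n : α) / 2) ^ k / k ! ≤ n.choose k := by
  refine le_trans ?_ (pow_le_choose k n)
  gcongr
  rw [div_le_iff₀ two_pos]
  exact_mod_cast (by omega : n ≤ (n + 1 - k) * 2)

theorem Nat.le_choose_div_choose {n k l : ℕ} (hk : 2 * k ≤ n) (hl : l ≤ n) :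
    l ! / (2 ^ k * k !) * ((n : α) ^ k / n ^ l) ≤ n.choose k / n.choose l := by
  calc l ! / (2 ^ k * k !) * ((n : α) ^ k / n ^ l)
      = ((n : α) / 2) ^ k / k ! / (n ^ l / l !) := by rw [div_pow]; field_simp
    _ ≤ n.choose k / n.choose l :=
        div_le_div₀ (by positivity) (half_pow_div_factorial_le_choose hk)
          (by exact_mod_cast choose_pos hl) (choose_le_pow_div l n)

theorem Nat.choose_div_choose_le {n k l : ℕ} (hl : 2 * l ≤ n) :
    (n.choose k : α) / n.choose l ≤ 2 ^ l * l ! / k ! * ((n : α) ^ k / n ^ l) := by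
  have hpos : (0 : α) < ((n : α) / 2) ^ l / l ! := by
    rcases l.eq_zero_or_pos with rfl | hl0
    · simp
    · have : (0 : α) < n := by exact_mod_cast (by omega : 0 < n)
      positivity
  calc (n.choose k : α) / n.choose l ≤ (n ^ k / k !) / (((n : α) / 2) ^ l / l !) :=
        div_le_div₀ (by positivity) (choose_le_pow_div k n) hpos
          (half_pow_div_factorial_le_choose hl)
    _ = 2 ^ l * l ! / k ! * ((n : α) ^ k / n ^ l) := by rw [div_pow]; field_simp

end ChooseBounds

section TopTwo

variable {A : Finset ℕ} {m m' : ℕ} {p : ℕ → ℝ}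

theorem mul_le_mul_of_isGreatest_erase (hm : IsGreatest (A : Set ℕ) m)
    (hm' : IsGreatest (A.erase m : Set ℕ) m') (hp0 : ∀ i ∈ A, 0 ≤ p i) (hp : MonotoneOn p A)
    {i j : ℕ} (hi : i ∈ A) (hj : j ∈ A) (hij : i ≠ j) : p i * p j ≤ p m * p m' := by
  wlog hlt : i < j generalizing i j
  · rw [mul_comm]
    exact this hj hi hij.symm (by omega)
  have hm'A : m' ∈ A := mem_of_mem_erase hm'.1
  have him' : i ≤ m' := hm'.2 (mem_erase.mpr ⟨by have := hm.2 hj; omega, hi⟩)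
  rw [mul_comm (p m)]
  exact mul_le_mul (hp hi hm'A him') (hp hj hm.1 (hm.2 hj)) (hp0 j hj) (hp0 m' hm'A)

theorem one_le_card_mul_of_isGreatest (hm : IsGreatest (A : Set ℕ) m) (hp : MonotoneOn p A)
    (hp1 : ∑ i ∈ A, p i = 1) : 1 ≤ A.card * p m := by
  rw [← hp1, ← nsmul_eq_mul]
  exact sum_le_card_nsmul A p (p m) fun i hi => hp hi hm.1 (hm.2 hi)

theorem pos_of_isGreatest (hm : IsGreatest (A : Set ℕ) m) (hp : MonotoneOn p A)
    (hp1 : ∑ i ∈ A, p i = 1) : 0 < p m :=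
  pos_of_mul_pos_right (one_pos.trans_le (one_le_card_mul_of_isGreatest hm hp hp1))
    (Nat.cast_nonneg _)

theorem le_sum_sum_mul_sub_sq (hm : IsGreatest (A : Set ℕ) m)
    (hm' : IsGreatest (A.erase m : Set ℕ) m') (hp0 : ∀ i ∈ A, 0 ≤ p i) (hp : MonotoneOn p A)
    (hp1 : ∑ i ∈ A, p i = 1) :
    ((m : ℝ) - m') ^ 2 / A.card ^ 2 * (p m' / p m)
      ≤ ∑ i ∈ A, ∑ j ∈ A, p i * p j * ((i : ℝ) - j) ^ 2 := by
  have hm'A : m' ∈ A := mem_of_mem_erase hm'.1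
  have hpm := pos_of_isGreatest hm hp hp1
  have hcard : (A.card : ℝ) ≠ 0 := Nat.cast_ne_zero.mpr (card_ne_zero_of_mem hm.1)
  have hterm : ∀ i ∈ A, ∀ j ∈ A, 0 ≤ p i * p j * ((i : ℝ) - j) ^ 2 := fun i hi j hj => by
    have := hp0 i hi; have := hp0 j hj; positivity
  calc ((m : ℝ) - m') ^ 2 / A.card ^ 2 * (p m' / p m)
      ≤ ((m : ℝ) - m') ^ 2 * (A.card * p m) ^ 2 / A.card ^ 2 * (p m' / p m) := by
        have := hp0 m' hm'A
        gcongr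
        exact le_mul_of_one_le_right (sq_nonneg _)
          (one_le_pow₀ (one_le_card_mul_of_isGreatest hm hp hp1))
    _ = p m * p m' * ((m : ℝ) - m') ^ 2 := by field_simp
    _ ≤ ∑ j ∈ A, p m * p j * ((m : ℝ) - j) ^ 2 :=
        single_le_sum (f := fun j => p m * p j * ((m : ℝ) - j) ^ 2) (hterm m hm.1) hm'A
    _ ≤ ∑ i ∈ A, ∑ j ∈ A, p i * p j * ((i : ℝ) - j) ^ 2 :=
        single_le_sum (f := fun i => ∑ j ∈ A, p i * p j * ((i : ℝ) - j) ^ 2)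
          (fun i hi => sum_nonneg (hterm i hi)) hm.1

theorem sum_sum_mul_sub_sq_le (hm : IsGreatest (A : Set ℕ) m)
    (hm' : IsGreatest (A.erase m : Set ℕ) m') (hp0 : ∀ i ∈ A, 0 ≤ p i) (hp : MonotoneOn p A)
    (hp1 : ∑ i ∈ A, p i = 1) :
    ∑ i ∈ A, ∑ j ∈ A, p i * p j * ((i : ℝ) - j) ^ 2
      ≤ A.card ^ 2 * m ^ 2 * (p m' / p m) := by
  have hpm' : 0 ≤ p m' := hp0 m' (mem_of_mem_erase hm'.1)
  have hpmm' : 0 ≤ p m * p m' := mul_nonneg (hp0 m hm.1) hpm'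
  have hterm : ∀ i ∈ A, ∀ j ∈ A,
      p i * p j * ((i : ℝ) - j) ^ 2 ≤ m ^ 2 * (p m * p m') := by
    intro i hi j hj
    rcases eq_or_ne i j with rfl | hij
    · rw [sub_self, zero_pow two_ne_zero, mul_zero]
      positivity
    have hsq : ((i : ℝ) - j) ^ 2 ≤ m ^ 2 := by
      have hi' : (i : ℝ) ≤ m := by exact_mod_cast hm.2 hi
      have hj' : (j : ℝ) ≤ m := by exact_mod_cast hm.2 hj
      exact sq_le_sq' (by linarith [(j.cast_nonneg : (0 : ℝ) ≤ j)])
        (by linarith [(i.cast_nonneg : (0 : ℝ) ≤ i)])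
    rw [mul_comm]
    exact mul_le_mul hsq (mul_le_mul_of_isGreatest_erase hm hm' hp0 hp hi hj hij)
      (mul_nonneg (hp0 i hi) (hp0 j hj)) (sq_nonneg _)
  have hpm1 : p m ≤ 1 := hp1 ▸ single_le_sum hp0 hm.1
  calc ∑ i ∈ A, ∑ j ∈ A, p i * p j * ((i : ℝ) - j) ^ 2
      ≤ ∑ i ∈ A, ∑ j ∈ A, (m : ℝ) ^ 2 * (p m * p m') :=
        sum_le_sum fun i hi => sum_le_sum (hterm i hi)
    _ = A.card ^ 2 * m ^ 2 * (p m * p m') := by simp only [sum_const, nsmul_eq_mul]; ring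
    _ ≤ A.card ^ 2 * m ^ 2 * (p m' / p m) := by
        gcongr
        exact (mul_le_of_le_one_left hpm' hpm1).trans
          (le_div_self hpm' (pos_of_isGreatest hm hp hp1) hpm1)

end TopTwo

theorem variance_asymptotics_general (A : Finset ℕ)
    (m m' : ℕ) (hm : IsGreatest (A : Set ℕ) m)
    (hm' : IsGreatest ((A.erase m : Finset ℕ) : Set ℕ) m')
    (Ω : ℕ → Type*) [∀ b, MeasureSpace (Ω b)]
    [∀ b, IsProbabilityMeasure (ℙ : Measure (Ω b))]
    (Y : ∀ b, Ω b → ℝ) (hY : ∀ b, Measurable (Y b))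
    (hP : ∀ b, m ≤ b → ∀ i ∈ A, ℙ {ω | Y b ω = (i : ℝ)} =
      ENNReal.ofReal ((b.choose i : ℝ) / ∑ t ∈ A, (b.choose t : ℝ))) :
    ∃ c₁ c₂ : ℝ, 0 < c₁ ∧ 0 < c₂ ∧ ∃ b₀ : ℕ, ∀ b : ℕ, b₀ ≤ b → m ≤ b →
      c₁ * (b : ℝ) ^ ((m' : ℤ) - (m : ℤ)) ≤ variance (Y b) ℙ ∧
        variance (Y b) ℙ ≤ c₂ * (b : ℝ) ^ ((m' : ℤ) - (m : ℤ)) := by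
  have hm'm : m' < m := (hm.2 (mem_of_mem_erase hm'.1)).lt_of_ne (ne_of_mem_erase hm'.1)
  have hcard : (0 : ℝ) < A.card := by exact_mod_cast card_pos.mpr ⟨m, hm.1⟩
  refine ⟨((m : ℝ) - m') ^ 2 / A.card ^ 2 * (m ! / (2 ^ m' * m' !)) / 2,
    A.card ^ 2 * m ^ 2 * (2 ^ m * m ! / m' !) / 2, ?_, ?_, 2 * m, fun b hb hmb => ?_⟩
  · have : (0 : ℝ) < m - m' := sub_pos.mpr (by exact_mod_cast hm'm)
    positivity
  · have : (0 : ℝ) < m := by exact_mod_cast m'.zero_le.trans_lt hm'm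
    positivity
  set S := ∑ t ∈ A, (b.choose t : ℝ)
  set p : ℕ → ℝ := fun i => (b.choose i : ℝ) / S
  have hS : 0 < S := (show (0 : ℝ) < b.choose m by exact_mod_cast choose_pos hmb).trans_le
    (single_le_sum (f := fun t => (b.choose t : ℝ)) (fun t _ => by positivity) hm.1)
  have hp0 : ∀ i ∈ A, 0 ≤ p i := fun i _ => by positivity
  have hp1 : ∑ i ∈ A, p i = 1 := by rw [← sum_div, div_self hS.ne']
  have hhalf : ∀ i ∈ A, i ∈ Set.Iic (b / 2) := fun i hi => (hm.2 hi).trans (by omega)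
  have hp : MonotoneOn p A := fun i hi j hj hij => div_le_div_of_nonneg_right
    (by exact_mod_cast b.choose_monotoneOn_Iic_half (hhalf i hi) (hhalf j hj) hij) hS.le
  have hratio : p m' / p m = (b.choose m' : ℝ) / b.choose m :=
    div_div_div_cancel_right₀ hS.ne' _ _
  have hpow : (b : ℝ) ^ ((m' : ℤ) - m) = (b : ℝ) ^ m' / b ^ m := by
    rw [zpow_sub₀ (by exact_mod_cast (by omega : b ≠ 0)), zpow_natCast, zpow_natCast]
  rw [variance_eq_sum_sum (hY b) Nat.cast_injective.injOn (hP b hmb) hp0 hp1, hpow]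
  constructor
  · calc _ = (m - m') ^ 2 / A.card ^ 2 * (m ! / (2 ^ m' * m' !) * ((b : ℝ) ^ m' / b ^ m)) / 2 :=
          by ring
      _ ≤ ((m : ℝ) - m') ^ 2 / A.card ^ 2 * (p m' / p m) / 2 := by
          rw [hratio]; gcongr; exact le_choose_div_choose (by omega) hmb
      _ ≤ _ := by gcongr; exact le_sum_sum_mul_sub_sq hm hm' hp0 hp hp1
  · calc _ ≤ A.card ^ 2 * m ^ 2 * (p m' / p m) / 2 := by
          gcongr; exact sum_sum_mul_sub_sq_le hm hm' hp0 hp hp1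
      _ ≤ A.card ^ 2 * m ^ 2 * (2 ^ m * m ! / m' ! * (b ^ m' / b ^ m)) / 2 := by
          rw [hratio]; gcongr; exact choose_div_choose_le (by omega)
      _ = _ := by ring

/-- Asymptotics of the variance of the number of summands from a bin of size `b` with
allowed counts `A` (`|A| ≥ 2`, `m = max A`, `m' = max (A \ {m})`): as `b → ∞`,
`Var(Y_b) = Θ(b^{m'−m})`. -/
theorem variance_asymptotics (A : Finset ℕ) (hcard : 2 ≤ A.card)
    (m m' : ℕ) (hm : IsGreatest (A : Set ℕ) m)
    (hm' : IsGreatest ((A.erase m : Finset ℕ) : Set ℕ) m')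
    (Ω : ℕ → Type*) [∀ b, MeasureSpace (Ω b)]
    [∀ b, IsProbabilityMeasure (ℙ : Measure (Ω b))]
    (Y : ∀ b, Ω b → ℝ) (hY : ∀ b, Measurable (Y b))
    (hP : ∀ b, m ≤ b → ∀ i ∈ A, ℙ {ω | Y b ω = (i : ℝ)} =
      ENNReal.ofReal ((b.choose i : ℝ) / ∑ t ∈ A, (b.choose t : ℝ))) :
    ∃ c₁ c₂ : ℝ, 0 < c₁ ∧ 0 < c₂ ∧ ∃ b₀ : ℕ, ∀ b : ℕ, b₀ ≤ b → m ≤ b →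
      c₁ * (b : ℝ) ^ ((m' : ℤ) - (m : ℤ)) ≤ variance (Y b) ℙ ∧
        variance (Y b) ℙ ≤ c₂ * (b : ℝ) ^ ((m' : ℤ) - (m : ℤ)) :=
  variance_asymptotics_general A m m' hm hm' Ω Y hY hP
end

section
/- Fix a set A of nonnegative integers with |A| ≥ 2, with m = max(A) and m' = max(A \ {m}), and fix a real δ > 0. For each integer b ≥ m, let Y_b be a random variable with P(Y_b = i) = C(b,i)/Σ_{t∈A} C(b,t) for i ∈ A, and let μ_b = E[Y_b]. Then there exist constants c_1, c_2 > 0 and an integer b_0 such that for all b ≥ b_0, c_1·b^{m'−m} ≤ E[|Y_b − μ_b|^{2+δ}] ≤ c_2·b^{m'−m}. -/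
/-!
Since `C(b, i) ≍ bⁱ`, every `i ∈ A` other than `m` has probability `O(b^(m'-m))` under the law of
`Y_b`, and `m'` has probability `≍ b^(m'-m)`. Hence the mean is `m - O(b^(m'-m))`: the atom at `m`
contributes `O(b^((m'-m)(2+δ)))` to the moment, the other atoms lie within distance `m` of the mean
and contribute `O(b^(m'-m))`, while the atom at `m'` lies at distance at least `1/2` from the mean
and contributes `≍ b^(m'-m)`.
-/

open MeasureTheory ProbabilityTheory Finset
open scoped Nat

section FiniteLaw

variable {Ω : Type*} [MeasurableSpace Ω] {μ : Measure Ω}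

theorem integral_comp_eq_sum_of_ae_mem [IsFiniteMeasure μ] {α E : Type*} [MeasurableSpace α]
    [MeasurableSingletonClass α] [NormedAddCommGroup E] [NormedSpace ℝ E] [CompleteSpace E]
    {Y : Ω → α} (hY : Measurable Y) {s : Finset α} (hs : ∀ᵐ ω ∂μ, Y ω ∈ s) (g : α → E) :
    ∫ ω, g (Y ω) ∂μ = ∑ x ∈ s, μ.real (Y ⁻¹' {x}) • g x := by
  have hfiber (x : α) : MeasurableSet (Y ⁻¹' {x}) := hY (measurableSet_singleton x)
  have hsplit : (fun ω ↦ g (Y ω)) =ᵐ[μ]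
      fun ω ↦ ∑ x ∈ s, (Y ⁻¹' {x}).indicator (fun _ ↦ g x) ω := by
    filter_upwards [hs] with ω hω
    rw [sum_eq_single_of_mem (Y ω) hω, Set.indicator_of_mem (s := Y ⁻¹' {Y ω}) rfl]
    exact fun x _ hx ↦ Set.indicator_of_notMem (Ne.symm hx) _
  rw [integral_congr_ae hsplit,
    integral_finsetSum _ fun x _ ↦ (integrable_const (g x)).indicator (hfiber x)]
  exact sum_congr rfl fun x _ ↦ integral_indicator_const _ (hfiber x)

theorem integral_comp_eq_sum_of_measure_eq [IsProbabilityMeasure μ] {Y : Ω → ℝ}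
    (hY : Measurable Y) {A : Finset ℕ} {p : ℕ → ℝ} (hp0 : ∀ i ∈ A, 0 ≤ p i)
    (hp1 : ∑ i ∈ A, p i = 1) (hP : ∀ i ∈ A, μ {ω | Y ω = (i : ℝ)} = ENNReal.ofReal (p i))
    (g : ℝ → ℝ) :
    ∫ ω, g (Y ω) ∂μ = ∑ i ∈ A, p i * g i := by
  have hP' : ∀ i ∈ A, μ (Y ⁻¹' {(i : ℝ)}) = ENNReal.ofReal (p i) := hP
  have hcast : Set.InjOn (Nat.cast : ℕ → ℝ) A := Nat.cast_injective.injOn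
  have hs : ∀ᵐ ω ∂μ, Y ω ∈ A.image (Nat.cast : ℕ → ℝ) := by
    change Y ⁻¹' ↑(A.image (Nat.cast : ℕ → ℝ)) ∈ ae μ
    rw [mem_ae_iff_prob_eq_one (hY (Finset.measurableSet _)),
      ← sum_measure_preimage_singleton _ fun x _ ↦ hY (measurableSet_singleton x),
      sum_image hcast, sum_congr rfl hP', ← ENNReal.ofReal_sum_of_nonneg hp0, hp1,
      ENNReal.ofReal_one]
  rw [integral_comp_eq_sum_of_ae_mem hY hs, sum_image hcast]
  refine sum_congr rfl fun i hi ↦ ?_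
  rw [measureReal_def, hP' i hi, ENNReal.toReal_ofReal (hp0 i hi), smul_eq_mul]

end FiniteLaw

def discreteMean (A : Finset ℕ) (p : ℕ → ℝ) : ℝ := ∑ i ∈ A, p i * i

noncomputable def discreteAbsMoment (A : Finset ℕ) (p : ℕ → ℝ) (r : ℝ) : ℝ :=
  ∑ i ∈ A, p i * |(i : ℝ) - discreteMean A p| ^ r

section DiscreteMoments

variable {A : Finset ℕ} {p : ℕ → ℝ} {m : ℕ}

theorem discreteMean_nonneg (hp0 : ∀ i ∈ A, 0 ≤ p i) : 0 ≤ discreteMean A p :=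
  sum_nonneg fun i hi ↦ mul_nonneg (hp0 i hi) i.cast_nonneg

theorem discreteMean_le (hp0 : ∀ i ∈ A, 0 ≤ p i) (hp1 : ∑ i ∈ A, p i = 1)
    (hm : ∀ i ∈ A, i ≤ m) : discreteMean A p ≤ m :=
  calc discreteMean A p ≤ ∑ i ∈ A, p i * m :=
        sum_le_sum fun i hi ↦ mul_le_mul_of_nonneg_left (by exact_mod_cast hm i hi) (hp0 i hi)
    _ = m := by rw [← sum_mul, hp1, one_mul]

theorem sub_discreteMean_le (hp0 : ∀ i ∈ A, 0 ≤ p i) (hp1 : ∑ i ∈ A, p i = 1)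
    (hm : IsGreatest (A : Set ℕ) m) :
    (m : ℝ) - discreteMean A p ≤ m * ∑ i ∈ A.erase m, p i :=
  calc (m : ℝ) - discreteMean A p = ∑ i ∈ A, p i * (m - i) := by
        simp only [discreteMean, mul_sub, sum_sub_distrib, ← sum_mul, hp1, one_mul]
    _ = ∑ i ∈ A.erase m, p i * (m - i) := by
        rw [← add_sum_erase A _ hm.1, sub_self, mul_zero, zero_add]
    _ ≤ ∑ i ∈ A.erase m, p i * m := sum_le_sum fun i hi ↦
        mul_le_mul_of_nonneg_left (by linarith [i.cast_nonneg (α := ℝ)])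
          (hp0 i (mem_of_mem_erase hi))
    _ = m * ∑ i ∈ A.erase m, p i := by rw [← sum_mul, mul_comm]

theorem discreteAbsMoment_le (hp0 : ∀ i ∈ A, 0 ≤ p i) (hp1 : ∑ i ∈ A, p i = 1)
    (hm : IsGreatest (A : Set ℕ) m) {r : ℝ} (hr : 1 ≤ r) :
    discreteAbsMoment A p r ≤ 2 * (m : ℝ) ^ r * ∑ i ∈ A.erase m, p i := by
  set q := ∑ i ∈ A.erase m, p i
  set μ := discreteMean A p
  have hsplit : p m + q = 1 := by rw [add_sum_erase A _ hm.1, hp1]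
  have hpm : 0 ≤ p m := hp0 m hm.1
  have hq0 : 0 ≤ q := sum_nonneg fun i hi ↦ hp0 i (mem_of_mem_erase hi)
  have hμ0 : 0 ≤ μ := discreteMean_nonneg hp0
  have hμm : μ ≤ m := discreteMean_le hp0 hp1 hm.2
  have hhead : p m * |(m : ℝ) - μ| ^ r ≤ (m : ℝ) ^ r * q :=
    calc p m * |(m : ℝ) - μ| ^ r ≤ 1 * (m * q) ^ r := by
          gcongr
          · linarith
          · rw [abs_of_nonneg (by linarith)]
            exact sub_discreteMean_le hp0 hp1 hm
      _ = (m : ℝ) ^ r * q ^ r := by rw [one_mul, Real.mul_rpow m.cast_nonneg hq0]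
      _ ≤ (m : ℝ) ^ r * q := by gcongr; exact Real.rpow_le_self_of_le_one hq0 (by linarith) hr
  have htail : ∑ i ∈ A.erase m, p i * |(i : ℝ) - μ| ^ r ≤ (m : ℝ) ^ r * q :=
    calc ∑ i ∈ A.erase m, p i * |(i : ℝ) - μ| ^ r ≤ ∑ i ∈ A.erase m, p i * (m : ℝ) ^ r := by
          refine sum_le_sum fun i hi ↦ ?_
          have hiA := mem_of_mem_erase hi
          have him : (i : ℝ) ≤ m := by exact_mod_cast hm.2 hiA
          gcongr
          · exact hp0 i hiA
          · rw [abs_sub_le_iff]; constructor <;> linarith [i.cast_nonneg (α := ℝ)]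
      _ = (m : ℝ) ^ r * q := by rw [← sum_mul, mul_comm]
  calc discreteAbsMoment A p r
      = p m * |(m : ℝ) - μ| ^ r + ∑ i ∈ A.erase m, p i * |(i : ℝ) - μ| ^ r :=
        (add_sum_erase A _ hm.1).symm
    _ ≤ (m : ℝ) ^ r * q + (m : ℝ) ^ r * q := add_le_add hhead htail
    _ = 2 * (m : ℝ) ^ r * q := by ring

theorem le_discreteAbsMoment (hp0 : ∀ i ∈ A, 0 ≤ p i) {m' : ℕ} (hm'A : m' ∈ A) (hm'm : m' < m)
    (hgap : (m : ℝ) - discreteMean A p ≤ 1 / 2) {r : ℝ} (hr : 0 ≤ r) :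
    (1 / 2) ^ r * p m' ≤ discreteAbsMoment A p r := by
  have hfar : 1 / 2 ≤ |(m' : ℝ) - discreteMean A p| := by
    have : (m' : ℝ) + 1 ≤ m := by exact_mod_cast hm'm
    rw [abs_sub_comm]
    exact le_abs.2 (Or.inl (by linarith))
  calc (1 / 2) ^ r * p m' ≤ p m' * |(m' : ℝ) - discreteMean A p| ^ r := by
        rw [mul_comm]; gcongr; exact hp0 m' hm'A
    _ ≤ discreteAbsMoment A p r :=
        single_le_sum (f := fun i ↦ p i * |(i : ℝ) - discreteMean A p| ^ r)
          (fun i hi ↦ mul_nonneg (hp0 i hi) (by positivity)) hm'A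

end DiscreteMoments

theorem pow_div_le_choose {n k : ℕ} (h : 2 * k ≤ n) :
    (n : ℝ) ^ k / (2 ^ k * k !) ≤ n.choose k :=
  calc (n : ℝ) ^ k / (2 ^ k * k !) = ((n : ℝ) / 2) ^ k / k ! := by rw [div_pow, div_div]
    _ ≤ ((n + 1 - k : ℕ) : ℝ) ^ k / k ! := by
        have hk : 2 * (k : ℝ) ≤ n := by exact_mod_cast h
        gcongr
        rw [Nat.cast_sub (by omega)]
        push_cast
        linarith
    _ ≤ n.choose k := Nat.pow_le_choose k n

theorem lt_of_mem_erase_of_isGreatest {α : Type*} [LinearOrder α] [DecidableEq α] {A : Finset α}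
    {m i : α} (hm : IsGreatest (A : Set α) m) (hi : i ∈ A.erase m) : i < m :=
  (hm.2 (mem_of_mem_erase hi)).lt_of_ne (ne_of_mem_erase hi)

noncomputable def binProb (A : Finset ℕ) (b i : ℕ) : ℝ :=
  (b.choose i : ℝ) / ∑ t ∈ A, (b.choose t : ℝ)

section BinProb

variable {A : Finset ℕ} {b m : ℕ}

theorem binProb_nonneg (i : ℕ) : 0 ≤ binProb A b i := by unfold binProb; positivity

theorem sum_choose_pos (hmA : m ∈ A) (hmb : m ≤ b) : 0 < ∑ t ∈ A, (b.choose t : ℝ) :=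
  sum_pos' (fun t _ ↦ by positivity) ⟨m, hmA, by exact_mod_cast Nat.choose_pos hmb⟩

theorem sum_binProb (hmA : m ∈ A) (hmb : m ≤ b) : ∑ i ∈ A, binProb A b i = 1 := by
  simp only [binProb]
  rw [← sum_div, div_self (sum_choose_pos hmA hmb).ne']

theorem le_binProb (hm : ∀ t ∈ A, t ≤ m) {k : ℕ} (hkA : k ∈ A) (hk : 2 * k ≤ b) (hb : 1 ≤ b) :
    (b : ℝ) ^ ((k : ℤ) - m) / (2 ^ k * k ! * A.card) ≤ binProb A b k := by
  have hb0 : (0 : ℝ) < b := by exact_mod_cast hb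
  have hS : ∑ t ∈ A, (b.choose t : ℝ) ≤ A.card * (b : ℝ) ^ m :=
    calc ∑ t ∈ A, (b.choose t : ℝ) ≤ ∑ _t ∈ A, (b : ℝ) ^ m := sum_le_sum fun t ht ↦
          (by exact_mod_cast Nat.choose_le_pow b t : (b.choose t : ℝ) ≤ (b : ℝ) ^ t).trans
            (pow_le_pow_right₀ (by exact_mod_cast hb) (hm t ht))
      _ = A.card * (b : ℝ) ^ m := by rw [sum_const, nsmul_eq_mul]
  calc (b : ℝ) ^ ((k : ℤ) - m) / (2 ^ k * k ! * A.card)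
      = (b : ℝ) ^ k / (2 ^ k * k !) / (A.card * (b : ℝ) ^ m) := by
        rw [zpow_sub₀ hb0.ne', zpow_natCast, zpow_natCast]
        field_simp
    _ ≤ binProb A b k :=
        div_le_div₀ (by positivity) (pow_div_le_choose hk) (sum_choose_pos hkA (by omega)) hS

theorem sum_binProb_erase_le (hm : IsGreatest (A : Set ℕ) m) {m' : ℕ}
    (hm' : ∀ i ∈ A.erase m, i ≤ m') (hb : 2 * m ≤ b) (hb1 : 1 ≤ b) :
    ∑ i ∈ A.erase m, binProb A b i ≤ A.card * 2 ^ m * m ! * (b : ℝ) ^ ((m' : ℤ) - m) := by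
  have hb0 : (0 : ℝ) < b := by exact_mod_cast hb1
  have hS : (b : ℝ) ^ m / (2 ^ m * m !) ≤ ∑ t ∈ A, (b.choose t : ℝ) :=
    (pow_div_le_choose hb).trans
      (single_le_sum (f := fun t ↦ (b.choose t : ℝ)) (fun _ _ ↦ by positivity) hm.1)
  have hterm : ∀ i ∈ A.erase m, binProb A b i ≤ 2 ^ m * m ! * (b : ℝ) ^ ((m' : ℤ) - m) := by
    intro i hi
    calc binProb A b i ≤ (b : ℝ) ^ i / ((b : ℝ) ^ m / (2 ^ m * m !)) :=
          div_le_div₀ (by positivity) (by exact_mod_cast Nat.choose_le_pow b i) (by positivity) hS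
      _ = 2 ^ m * m ! * (b : ℝ) ^ ((i : ℤ) - m) := by
          rw [zpow_sub₀ hb0.ne', zpow_natCast, zpow_natCast]
          field_simp
      _ ≤ 2 ^ m * m ! * (b : ℝ) ^ ((m' : ℤ) - m) := by
          gcongr
          · exact_mod_cast hb1
          · exact_mod_cast hm' i hi
  calc ∑ i ∈ A.erase m, binProb A b i
      ≤ ∑ _i ∈ A.erase m, 2 ^ m * m ! * (b : ℝ) ^ ((m' : ℤ) - m) := sum_le_sum hterm
    _ = (A.erase m).card * (2 ^ m * m ! * (b : ℝ) ^ ((m' : ℤ) - m)) := by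
        rw [sum_const, nsmul_eq_mul]
    _ ≤ A.card * (2 ^ m * m ! * (b : ℝ) ^ ((m' : ℤ) - m)) := by
        gcongr
        exact erase_subset m A
    _ = A.card * 2 ^ m * m ! * (b : ℝ) ^ ((m' : ℤ) - m) := by ring

variable {m' : ℕ} {r : ℝ}

theorem discreteAbsMoment_binProb_le (hm : IsGreatest (A : Set ℕ) m)
    (hm' : IsGreatest (A.erase m : Set ℕ) m') (hr : 1 ≤ r) (hb : 2 * m ≤ b) :
    discreteAbsMoment A (binProb A b) r
      ≤ 2 * (m : ℝ) ^ r * (A.card * 2 ^ m * m !) * (b : ℝ) ^ ((m' : ℤ) - m) := by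
  have hm'm := lt_of_mem_erase_of_isGreatest hm hm'.1
  calc discreteAbsMoment A (binProb A b) r
      ≤ 2 * (m : ℝ) ^ r * ∑ i ∈ A.erase m, binProb A b i :=
        discreteAbsMoment_le (fun i _ ↦ binProb_nonneg i) (sum_binProb hm.1 (by omega)) hm hr
    _ ≤ 2 * (m : ℝ) ^ r * (A.card * 2 ^ m * m ! * (b : ℝ) ^ ((m' : ℤ) - m)) := by
        gcongr
        exact sum_binProb_erase_le hm hm'.2 hb (by omega)
    _ = 2 * (m : ℝ) ^ r * (A.card * 2 ^ m * m !) * (b : ℝ) ^ ((m' : ℤ) - m) := by ring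

theorem le_discreteAbsMoment_binProb (hm : IsGreatest (A : Set ℕ) m)
    (hm' : IsGreatest (A.erase m : Set ℕ) m') (hr : 0 ≤ r)
    (hb : 2 * m * (A.card * 2 ^ m * m !) ≤ b) :
    (1 / 2) ^ r / (2 ^ m' * m' ! * A.card) * (b : ℝ) ^ ((m' : ℤ) - m)
      ≤ discreteAbsMoment A (binProb A b) r := by
  have hm'A := mem_of_mem_erase hm'.1
  have hm'm := lt_of_mem_erase_of_isGreatest hm hm'.1
  have hC : 0 < A.card * 2 ^ m * m ! := by have := card_pos.2 ⟨m, hm.1⟩; positivity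
  have h2m : 2 * m ≤ b := (Nat.le_mul_of_pos_right _ hC).trans hb
  have hb1 : 1 ≤ b := by omega
  have hb' : (2 * m * (A.card * 2 ^ m * m !) : ℝ) ≤ b := by exact_mod_cast hb
  have hp0 : ∀ i ∈ A, 0 ≤ binProb A b i := fun i _ ↦ binProb_nonneg i
  have hx : (b : ℝ) ^ ((m' : ℤ) - m) ≤ (b : ℝ)⁻¹ := by
    simpa using zpow_le_zpow_right₀ (by exact_mod_cast hb1 : (1 : ℝ) ≤ b)
      (by omega : (m' : ℤ) - m ≤ -1)
  have hgap : (m : ℝ) - discreteMean A (binProb A b) ≤ 1 / 2 :=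
    calc (m : ℝ) - discreteMean A (binProb A b) ≤ m * ∑ i ∈ A.erase m, binProb A b i :=
          sub_discreteMean_le hp0 (sum_binProb hm.1 (by omega)) hm
      _ ≤ m * (A.card * 2 ^ m * m ! * (b : ℝ) ^ ((m' : ℤ) - m)) := by
          gcongr
          exact sum_binProb_erase_le hm hm'.2 h2m hb1
      _ ≤ m * (A.card * 2 ^ m * m ! * (b : ℝ)⁻¹) := by gcongr
      _ ≤ 1 / 2 := by
          rw [← mul_assoc, mul_inv_le_iff₀ (by exact_mod_cast hb1)]
          linarith
  calc (1 / 2) ^ r / (2 ^ m' * m' ! * A.card) * (b : ℝ) ^ ((m' : ℤ) - m)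
      = (1 / 2) ^ r * ((b : ℝ) ^ ((m' : ℤ) - m) / (2 ^ m' * m' ! * A.card)) := by ring
    _ ≤ (1 / 2) ^ r * binProb A b m' := by
        gcongr
        exact le_binProb hm.2 hm'A (by omega) hb1
    _ ≤ discreteAbsMoment A (binProb A b) r := le_discreteAbsMoment hp0 hm'A hm'm hgap hr

end BinProb

theorem absolute_moment_asymptotics_general (A : Finset ℕ)
    (m m' : ℕ) (hm : IsGreatest (A : Set ℕ) m)
    (hm' : IsGreatest ((A.erase m : Finset ℕ) : Set ℕ) m')
    (δ : ℝ) (hδ : 0 < δ)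
    (Ω : ℕ → Type*) [∀ b, MeasureSpace (Ω b)]
    [∀ b, IsProbabilityMeasure (ℙ : Measure (Ω b))]
    (Y : ∀ b, Ω b → ℝ) (hY : ∀ b, Measurable (Y b))
    (hP : ∀ b, m ≤ b → ∀ i ∈ A, ℙ {ω | Y b ω = (i : ℝ)} =
      ENNReal.ofReal ((b.choose i : ℝ) / ∑ t ∈ A, (b.choose t : ℝ))) :
    ∃ c₁ c₂ : ℝ, 0 < c₁ ∧ 0 < c₂ ∧ ∃ b₀ : ℕ, ∀ b : ℕ, b₀ ≤ b → m ≤ b →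
      c₁ * (b : ℝ) ^ ((m' : ℤ) - (m : ℤ)) ≤
          (∫ ω, |Y b ω - ∫ ω', Y b ω' ∂ℙ| ^ (2 + δ) ∂ℙ) ∧
        (∫ ω, |Y b ω - ∫ ω', Y b ω' ∂ℙ| ^ (2 + δ) ∂ℙ) ≤
          c₂ * (b : ℝ) ^ ((m' : ℤ) - (m : ℤ)) := by
  have hm0 : 0 < m := (Nat.zero_le m').trans_lt (lt_of_mem_erase_of_isGreatest hm hm'.1)
  have hcard : 0 < A.card := card_pos.2 ⟨m, hm.1⟩
  have hC : 0 < A.card * 2 ^ m * m ! := by positivity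
  refine ⟨(1 / 2) ^ (2 + δ) / (2 ^ m' * m' ! * A.card),
    2 * (m : ℝ) ^ (2 + δ) * (A.card * 2 ^ m * m !), by positivity, by positivity,
    2 * m * (A.card * 2 ^ m * m !), fun b hb hmb ↦ ?_⟩
  have hlaw := integral_comp_eq_sum_of_measure_eq (p := binProb A b) (hY b)
    (fun i _ ↦ binProb_nonneg i) (sum_binProb hm.1 hmb) (hP b hmb)
  have hmoment : ∫ ω, |Y b ω - ∫ ω', Y b ω' ∂ℙ| ^ (2 + δ) ∂ℙ
      = discreteAbsMoment A (binProb A b) (2 + δ) := by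
    rw [show ∫ ω, Y b ω ∂ℙ = discreteMean A (binProb A b) from hlaw fun t ↦ t]
    exact hlaw fun t ↦ |t - discreteMean A (binProb A b)| ^ (2 + δ)
  rw [hmoment]
  exact ⟨le_discreteAbsMoment_binProb hm hm' (by linarith) hb,
    discreteAbsMoment_binProb_le hm hm' (by linarith) ((Nat.le_mul_of_pos_right _ hC).trans hb)⟩

/-- Asymptotics of the `(2+δ)`-th centered absolute moment of the number of summands
from a bin of size `b` with allowed counts `A` (`|A| ≥ 2`, `m = max A`,
`m' = max (A \ {m})`): as `b → ∞`, `E[|Y_b − μ_b|^{2+δ}] = Θ(b^{m'−m})`. -/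
theorem absolute_moment_asymptotics (A : Finset ℕ) (hcard : 2 ≤ A.card)
    (m m' : ℕ) (hm : IsGreatest (A : Set ℕ) m)
    (hm' : IsGreatest ((A.erase m : Finset ℕ) : Set ℕ) m')
    (δ : ℝ) (hδ : 0 < δ)
    (Ω : ℕ → Type*) [∀ b, MeasureSpace (Ω b)]
    [∀ b, IsProbabilityMeasure (ℙ : Measure (Ω b))]
    (Y : ∀ b, Ω b → ℝ) (hY : ∀ b, Measurable (Y b))
    (hP : ∀ b, m ≤ b → ∀ i ∈ A, ℙ {ω | Y b ω = (i : ℝ)} =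
      ENNReal.ofReal ((b.choose i : ℝ) / ∑ t ∈ A, (b.choose t : ℝ))) :
    ∃ c₁ c₂ : ℝ, 0 < c₁ ∧ 0 < c₂ ∧ ∃ b₀ : ℕ, ∀ b : ℕ, b₀ ≤ b → m ≤ b →
      c₁ * (b : ℝ) ^ ((m' : ℤ) - (m : ℤ)) ≤
          (∫ ω, |Y b ω - ∫ ω', Y b ω' ∂ℙ| ^ (2 + δ) ∂ℙ) ∧
        (∫ ω, |Y b ω - ∫ ω', Y b ω' ∂ℙ| ^ (2 + δ) ∂ℙ) ≤
          c₂ * (b : ℝ) ^ ((m' : ℤ) - (m : ℤ)) :=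
  absolute_moment_asymptotics_general A m m' hm hm' δ hδ Ω Y hY hP
end

section
/- Define B_1 = {1,2,3} and, for n ≥ 2, B_n = {3·5^{n−2}, 9·5^{n−2}, 15·5^{n−2}}. For any N, the map sending a legal choice on bins 1,...,N to its value (the sum of all chosen elements) is injective: two legal choices with the same value are identical. In particular every integer that is representable as such a sum has a unique such representation. -/
/-- The bins of the `2`-nary sequence with `b_n = 3`, `A_n = {0,2}`:
`B₁ = {1,2,3}` and `Bₙ = {3·5^{n−2}, 9·5^{n−2}, 15·5^{n−2}}` for `n ≥ 2`. -/
def gbin : ℕ → Finset ℕ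
  | 0 => ∅
  | 1 => {1, 2, 3}
  | (n + 2) => {3 * 5 ^ n, 9 * 5 ^ n, 15 * 5 ^ n}

/-!
In bin `n + 2` a legal choice contributes `0`, `12`, `18` or `24` times `5 ^ n`, that is a digit
`k ≤ 4` times `6 * 5 ^ n`, while bins `1, …, n + 1` together contribute less than `6 * 5 ^ n`.
So the value on bins `1, …, n + 2` taken modulo `6 * 5 ^ n` is the value on bins `1, …, n + 1`,
and by induction from the top the values of all bins agree. Inside one bin a `2`-subset of the
`3`-set is the complement of a single element, so its sum determines it.
-/

open Finset

theorem Finset.exists_eq_erase_of_subset_of_card_add_one {α : Type*} [DecidableEq α]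
    {s B : Finset α} (hs : s ⊆ B) (hcard : #s + 1 = #B) : ∃ x ∈ B, s = B.erase x := by
  obtain ⟨x, hxB, hxs⟩ := exists_of_ssubset (ssubset_of_subset_of_ne hs (by rintro rfl; omega))
  refine ⟨x, hxB, eq_of_subset_of_card_le (subset_erase.mpr ⟨hs, hxs⟩) ?_⟩
  rw [card_erase_of_mem hxB]
  omega

section Bin

variable {B s t : Finset ℕ}

lemma eq_empty_or_eq_erase_of_card_eq_three (hB : #B = 3) (hs : s ⊆ B)
    (hs2 : #s = 0 ∨ #s = 2) : s = ∅ ∨ ∃ x ∈ B, s = B.erase x := by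
  rcases hs2 with h0 | h2
  · exact .inl (card_eq_zero.mp h0)
  · exact .inr (exists_eq_erase_of_subset_of_card_add_one hs (by omega))

lemma sum_erase_ne_zero_of_card_eq_three (hB : #B = 3) {x : ℕ} (hx : x ∈ B) :
    ∑ y ∈ B.erase x, y ≠ 0 := by
  intro h
  have : #(B.erase x) ≤ 1 := card_le_one.mpr fun a ha b hb => by
    rw [sum_eq_zero_iff.mp h a ha, sum_eq_zero_iff.mp h b hb]
  rw [card_erase_of_mem hx, hB] at this
  omega

lemma eq_of_sum_eq_of_card_eq_three (hB : #B = 3)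
    (hs : s ⊆ B) (hs2 : #s = 0 ∨ #s = 2) (ht : t ⊆ B) (ht2 : #t = 0 ∨ #t = 2)
    (h : ∑ x ∈ s, x = ∑ x ∈ t, x) : s = t := by
  rcases eq_empty_or_eq_erase_of_card_eq_three hB hs hs2 with rfl | ⟨x, hx, rfl⟩ <;>
    rcases eq_empty_or_eq_erase_of_card_eq_three hB ht ht2 with rfl | ⟨y, hy, rfl⟩
  · rfl
  · exact absurd h.symm (by simpa using sum_erase_ne_zero_of_card_eq_three hB hy)
  · exact absurd h (by simpa using sum_erase_ne_zero_of_card_eq_three hB hx)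
  · have hxy : x = y := by
      have := (add_sum_erase B id hx).trans (add_sum_erase B id hy).symm
      simp only [id] at this
      omega
    rw [hxy]

end Bin

section Gbin

variable {s : Finset ℕ}

lemma card_gbin {n : ℕ} (hn : n ≠ 0) : #(gbin n) = 3 := by
  rcases n with _ | _ | n
  · contradiction
  · rfl
  · have : 0 < 5 ^ n := by positivity
    simp only [gbin]
    rw [card_insert_of_notMem (by simp), card_pair (by omega)]

lemma sum_le_five_of_subset_gbin_one (hs : s ⊆ gbin 1) (hs2 : #s = 0 ∨ #s = 2) :
    ∑ x ∈ s, x ≤ 5 := by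
  rcases eq_empty_or_eq_erase_of_card_eq_three (card_gbin one_ne_zero) hs hs2
    with rfl | ⟨x, hx, rfl⟩
  · simp
  · have htotal := add_sum_erase (gbin 1) id hx
    have hsum : ∑ y ∈ gbin 1, y = 6 := rfl
    have hx0 : x ≠ 0 := by rintro rfl; exact absurd hx (by decide)
    simp only [id, hsum] at htotal
    omega

lemma exists_sum_eq_of_subset_gbin_add_two {n : ℕ} (hs : s ⊆ gbin (n + 2))
    (hs2 : #s = 0 ∨ #s = 2) : ∃ k ≤ 4, ∑ x ∈ s, x = 6 * 5 ^ n * k := by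
  rcases eq_empty_or_eq_erase_of_card_eq_three (card_gbin (by omega)) hs hs2
    with rfl | ⟨x, hx, rfl⟩
  · exact ⟨0, by omega, by simp⟩
  · have htotal := add_sum_erase (gbin (n + 2)) id hx
    have : 0 < 5 ^ n := by positivity
    have hsum : ∑ y ∈ gbin (n + 2), y = 27 * 5 ^ n := by
      simp only [gbin]
      rw [sum_insert (by simp), sum_pair (by omega)]
      ring
    simp only [id, hsum] at htotal
    simp only [gbin, mem_insert, mem_singleton] at hx
    rcases hx with rfl | rfl | rfl
    · exact ⟨4, le_rfl, by omega⟩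
    · exact ⟨3, by omega, by omega⟩
    · exact ⟨2, by omega, by omega⟩

end Gbin

section Choice

def IsLegalChoice (c : ℕ → Finset ℕ) : Prop :=
  ∀ n, c n ⊆ gbin n ∧ (#(c n) = 0 ∨ #(c n) = 2)

def choiceValue (c : ℕ → Finset ℕ) (N : ℕ) : ℕ :=
  ∑ n ∈ Icc 1 N, ∑ x ∈ c n, x

variable {c d : ℕ → Finset ℕ}

lemma choiceValue_zero (c : ℕ → Finset ℕ) : choiceValue c 0 = 0 := by
  simp [choiceValue]

lemma choiceValue_succ (c : ℕ → Finset ℕ) (N : ℕ) :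
    choiceValue c (N + 1) = choiceValue c N + ∑ x ∈ c (N + 1), x :=
  sum_Icc_succ_top (by omega) _

lemma choiceValue_succ_lt (hc : IsLegalChoice c) (N : ℕ) : choiceValue c (N + 1) < 6 * 5 ^ N := by
  induction N with
  | zero =>
    rw [choiceValue_succ, choiceValue_zero, zero_add, pow_zero, mul_one]
    exact (sum_le_five_of_subset_gbin_one (hc 1).1 (hc 1).2).trans_lt (by norm_num)
  | succ N ih =>
    obtain ⟨k, hk, hbin⟩ := exists_sum_eq_of_subset_gbin_add_two (hc (N + 2)).1 (hc (N + 2)).2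
    have : 6 * 5 ^ N * k ≤ 6 * 5 ^ N * 4 := Nat.mul_le_mul_left _ hk
    rw [choiceValue_succ, hbin, pow_succ]
    omega

lemma choiceValue_add_two_mod (hc : IsLegalChoice c) (N : ℕ) :
    choiceValue c (N + 2) % (6 * 5 ^ N) = choiceValue c (N + 1) := by
  obtain ⟨k, -, hbin⟩ := exists_sum_eq_of_subset_gbin_add_two (hc (N + 2)).1 (hc (N + 2)).2
  rw [choiceValue_succ c (N + 1), hbin, Nat.add_mul_mod_self_left,
    Nat.mod_eq_of_lt (choiceValue_succ_lt hc N)]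

lemma choiceValue_eq_of_choiceValue_succ_eq (hc : IsLegalChoice c) (hd : IsLegalChoice d)
    {N : ℕ} (h : choiceValue c (N + 1) = choiceValue d (N + 1)) :
    choiceValue c N = choiceValue d N := by
  rcases N with _ | N
  · rw [choiceValue_zero, choiceValue_zero]
  · rw [← choiceValue_add_two_mod hc, ← choiceValue_add_two_mod hd, h]

end Choice

/-- Legal choices (each bin contributes either no elements or a 2-element subset) on
bins `1,…,N` with the same value are identical. -/
theorem gnary_unique_decomposition (N : ℕ) (c d : ℕ → Finset ℕ)
    (hc : ∀ n, c n ⊆ gbin n) (hc2 : ∀ n, (c n).card = 0 ∨ (c n).card = 2)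
    (hd : ∀ n, d n ⊆ gbin n) (hd2 : ∀ n, (d n).card = 0 ∨ (d n).card = 2)
    (hsum : ∑ n ∈ Finset.Icc 1 N, ∑ x ∈ c n, x = ∑ n ∈ Finset.Icc 1 N, ∑ x ∈ d n, x) :
    ∀ n ∈ Finset.Icc 1 N, c n = d n := by
  have hc' : IsLegalChoice c := fun n => ⟨hc n, hc2 n⟩
  have hd' : IsLegalChoice d := fun n => ⟨hd n, hd2 n⟩
  induction N with
  | zero => simp
  | succ N ih =>
    have hlow := choiceValue_eq_of_choiceValue_succ_eq hc' hd' hsum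
    have htop : ∑ x ∈ c (N + 1), x = ∑ x ∈ d (N + 1), x := by
      have h : choiceValue c (N + 1) = choiceValue d (N + 1) := hsum
      rw [choiceValue_succ, choiceValue_succ, hlow] at h
      omega
    intro n hn
    obtain ⟨hn1, hnN⟩ := mem_Icc.mp hn
    rcases hnN.eq_or_lt with rfl | hlt
    · exact eq_of_sum_eq_of_card_eq_three (card_gbin (by omega)) (hc _) (hc2 _) (hd _) (hd2 _)
        htop
    · exact ih hlow n (mem_Icc.mpr ⟨hn1, by omega⟩)
end

section
/- Define B_1 = {1,2,3} and, for n ≥ 2, B_n = {3·5^{n−2}, 9·5^{n−2}, 15·5^{n−2}}. For every n ≥ 1, the maximum value of a legal choice on bins 1,...,n equals Ω_n = 6·5^{n−1} − 1, and the gap between any two consecutive elements of bin n+1 equals 6·5^{n−1} = Ω_n + 1, which is strictly greater than Ω_n. -/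
/-- Per-bin maximum sum of a legal (0- or 2-element) choice. -/
def msum : ℕ → ℕ
  | 0 => 0
  | 1 => 5
  | (n + 2) => 24 * 5 ^ n

/-- Optimal per-bin choice. -/
def copt : ℕ → Finset ℕ
  | 0 => ∅
  | 1 => {2, 3}
  | (n + 2) => {9 * 5 ^ n, 15 * 5 ^ n}

lemma copt_subset (k : ℕ) : copt k ⊆ gbin k := by
  match k with
  | 0 => simp [copt, gbin]
  | 1 => simp [copt, gbin]
  | (m + 2) =>
      intro x hx
      simp [copt] at hx
      simp [gbin]
      omega

lemma copt_card (k : ℕ) : (copt k).card = 0 ∨ (copt k).card = 2 := by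
  match k with
  | 0 => left; simp [copt]
  | 1 => right; simp [copt]
  | (m + 2) =>
      right
      have h : 0 < 5 ^ m := pow_pos (by norm_num) m
      rw [copt, Finset.card_insert_of_notMem (by simp)]
      simp

lemma copt_sum (k : ℕ) : ∑ x ∈ copt k, x = msum k := by
  match k with
  | 0 => simp [copt, msum]
  | 1 => simp [copt, msum]
  | (m + 2) =>
      have h : 0 < 5 ^ m := pow_pos (by norm_num) m
      rw [copt, Finset.sum_pair (by omega), msum]
      ring

lemma sum_le_msum (k : ℕ) (c : Finset ℕ) (hc : c ⊆ gbin k)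
    (hcard : c.card = 0 ∨ c.card = 2) : ∑ x ∈ c, x ≤ msum k := by
  rcases hcard with h | h
  · simp [Finset.card_eq_zero.mp h]
  · obtain ⟨x, y, hxy, rfl⟩ := Finset.card_eq_two.mp h
    rw [Finset.sum_pair hxy]
    have hx := hc (Finset.mem_insert_self x {y})
    have hy := hc (Finset.mem_insert_of_mem (Finset.mem_singleton_self y))
    match k with
    | 0 => simp [gbin] at hx
    | 1 =>
        simp [gbin] at hx hy
        rw [msum]
        omega
    | (m + 2) =>
        simp [gbin] at hx hy
        have h5 : 0 < 5 ^ m := pow_pos (by norm_num) m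
        rw [msum]
        omega

lemma sum_msum (n : ℕ) (hn : 1 ≤ n) :
    ∑ k ∈ Finset.Icc 1 n, msum k = 6 * 5 ^ (n - 1) - 1 := by
  induction n, hn using Nat.le_induction with
  | base => simp [msum]
  | succ n hn ih =>
      rw [Finset.sum_Icc_succ_top (by omega), ih]
      obtain ⟨m, rfl⟩ := Nat.exists_eq_add_of_le hn
      have h5 : 0 < 5 ^ m := pow_pos (by norm_num) m
      have : msum (1 + m + 1) = 24 * 5 ^ m := by
        have : 1 + m + 1 = m + 2 := by ring
        rw [this, msum]
      rw [this]
      have h1 : 1 + m - 1 = m := by omega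
      have h2 : 1 + m + 1 - 1 = m + 1 := by omega
      rw [h1, h2, pow_succ]
      omega

/-- For every `n ≥ 1`: the maximum value `Ω_n` of a legal choice on bins `1,…,n`
equals `6·5^{n−1} − 1`, the gap between any two consecutive elements of bin `n+1`
equals `6·5^{n−1} = Ω_n + 1`, and in particular the gap is strictly greater than
`Ω_n`. -/
theorem gnary_gap_exceeds_max (n : ℕ) (hn : 1 ≤ n) :
    IsGreatest
        {v : ℕ | ∃ c : ℕ → Finset ℕ, (∀ k, c k ⊆ gbin k) ∧
          (∀ k, (c k).card = 0 ∨ (c k).card = 2) ∧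
          v = ∑ k ∈ Finset.Icc 1 n, ∑ x ∈ c k, x}
        (6 * 5 ^ (n - 1) - 1) ∧
      (∀ x ∈ gbin (n + 1), ∀ y ∈ gbin (n + 1), x < y →
        (∀ z ∈ gbin (n + 1), ¬(x < z ∧ z < y)) → y - x = 6 * 5 ^ (n - 1)) ∧
      6 * 5 ^ (n - 1) = (6 * 5 ^ (n - 1) - 1) + 1 ∧
      6 * 5 ^ (n - 1) - 1 < 6 * 5 ^ (n - 1) := by
  have h5 : 0 < 5 ^ (n - 1) := pow_pos (by norm_num) _
  refine ⟨⟨⟨copt, copt_subset, copt_card, ?_⟩, ?_⟩, ?_, by omega, by omega⟩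
  · rw [← sum_msum n hn]
    exact (Finset.sum_congr rfl fun k _ => (copt_sum k).symm)
  · rintro v ⟨c, hsub, hcard, rfl⟩
    calc ∑ k ∈ Finset.Icc 1 n, ∑ x ∈ c k, x
        ≤ ∑ k ∈ Finset.Icc 1 n, msum k :=
          Finset.sum_le_sum fun k _ => sum_le_msum k (c k) (hsub k) (hcard k)
      _ = 6 * 5 ^ (n - 1) - 1 := sum_msum n hn
  · obtain ⟨m, rfl⟩ := Nat.exists_eq_add_of_le hn
    have hEq : 1 + m + 1 = m + 2 := by ring
    have h1 : 1 + m - 1 = m := by omega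
    rw [hEq, h1]
    have h5 : 0 < 5 ^ m := pow_pos (by norm_num) m
    intro x hx y hy hxy hmid
    have h9 := hmid (9 * 5 ^ m) (by simp [gbin])
    simp [gbin] at hx hy
    omega
end

section
/- Define B_1 = {1,2,3} and, for n ≥ 2, B_n = {3·5^{n−2}, 9·5^{n−2}, 15·5^{n−2}}. For every n ≥ 1, the set I_n of values of legal choices on bins 1,...,n (including the empty choice, with value 0) has exactly 4^n elements. -/
/-- weight of a digit -/
def wdig : ℕ → ℕ
  | 0 => 0 | 1 => 2 | 2 => 3 | _ => 4

/-- per-bin sum corresponding to a digit -/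
def dig : ℕ → ℕ → ℕ
  | 0, _ => 0
  | 1, d => (match d with | 0 => 0 | 1 => 3 | 2 => 4 | _ => 5)
  | (k+2), d => 6 * 5 ^ k * wdig d

/-- choice corresponding to a digit -/
def chs : ℕ → ℕ → Finset ℕ
  | 0, _ => ∅
  | 1, d => (match d with | 0 => ∅ | 1 => {1,2} | 2 => {1,3} | _ => {2,3})
  | (k+2), d => (match d with
      | 0 => ∅ | 1 => {3*5^k, 9*5^k} | 2 => {3*5^k, 15*5^k} | _ => {9*5^k, 15*5^k})

lemma pow5_pos (k : ℕ) : 0 < 5 ^ k := pow_pos (by norm_num) k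

lemma chs_subset (k d : ℕ) : chs k d ⊆ gbin k := by
  have hp := pow5_pos k
  rcases k with _ | _ | k <;> rcases d with _ | _ | _ | d <;>
    simp [chs, gbin, Finset.insert_subset_iff]

lemma chs_card (k d : ℕ) : (chs k d).card = 0 ∨ (chs k d).card = 2 := by
  have hp := pow5_pos k
  rcases k with _ | _ | k <;> rcases d with _ | _ | _ | d <;>
    simp [chs, Finset.card_insert_of_notMem, Finset.card_pair] <;> omega

lemma chs_sum (k d : ℕ) : (∑ x ∈ chs k d, x) = dig k d := by
  have hp := pow5_pos k
  rcases k with _ | _ | k <;> rcases d with _ | _ | _ | d <;>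
    simp [chs, dig, wdig, Finset.sum_pair, show (1:ℕ) ≠ 2 by norm_num,
      show (1:ℕ) ≠ 3 by norm_num, show (2:ℕ) ≠ 3 by norm_num] <;>
  first
  | ring
  | (rw [Finset.sum_pair (by omega)] ; ring)

lemma wdig_le (d : ℕ) : wdig d ≤ 4 := by
  rcases d with _ | _ | _ | d <;> simp [wdig]

lemma dig_lt4 (d : ℕ) : dig 1 d ≤ 5 := by
  rcases d with _ | _ | _ | d <;> simp [dig]

lemma sum_eq_dig (k : ℕ) (c : Finset ℕ) (hsub : c ⊆ gbin k)
    (hcard : c.card = 0 ∨ c.card = 2) :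
    ∃ d, d < 4 ∧ (∑ x ∈ c, x) = dig k d := by
  rcases hcard with h0 | h2
  · refine ⟨0, by norm_num, ?_⟩
    rw [Finset.card_eq_zero.mp h0]
    rcases k with _ | _ | k <;> simp [dig, wdig]
  · obtain ⟨x, y, hxy, rfl⟩ := Finset.card_eq_two.mp h2
    have hx : x ∈ gbin k := hsub (by simp)
    have hy : y ∈ gbin k := hsub (by simp)
    rw [Finset.sum_pair hxy]
    rcases k with _ | _ | k
    · simp [gbin] at hx
    · simp [gbin] at hx hy
      have : x + y = 3 ∨ x + y = 4 ∨ x + y = 5 := by omega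
      rcases this with h | h | h
      · exact ⟨1, by norm_num, by simp [dig, h]⟩
      · exact ⟨2, by norm_num, by simp [dig, h]⟩
      · exact ⟨3, by norm_num, by simp [dig, h]⟩
    · simp [gbin] at hx hy
      have hp := pow5_pos k
      have : x + y = 12 * 5 ^ k ∨ x + y = 18 * 5 ^ k ∨ x + y = 24 * 5 ^ k := by
        rcases hx with h | h | h <;> rcases hy with h' | h' | h' <;> omega
      rcases this with h | h | h
      · exact ⟨1, by norm_num, by rw [h]; simp [dig, wdig]; ring⟩
      · exact ⟨2, by norm_num, by rw [h]; simp [dig, wdig]; ring⟩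
      · exact ⟨3, by norm_num, by rw [h]; simp [dig, wdig]; ring⟩

/-- total value of a digit string on bins 1..n -/
def gval (n : ℕ) (d : ℕ → ℕ) : ℕ := ∑ k ∈ Finset.Icc 1 n, dig k (d k)

lemma gval_succ (n : ℕ) (d : ℕ → ℕ) :
    gval (n + 1) d = gval n d + dig (n + 1) (d (n + 1)) := by
  unfold gval
  rw [Finset.sum_Icc_succ_top (by omega)]

lemma gval_lt (n : ℕ) (d : ℕ → ℕ) : gval n d < 6 * 5 ^ (n - 1) := by
  induction n with
  | zero => simp [gval]
  | succ m ih =>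
    rw [gval_succ]
    rcases m with _ | m
    · have := dig_lt4 (d 1)
      simp [gval]
      omega
    · have h1 : dig (m + 2) (d (m + 2)) ≤ 24 * 5 ^ m := by
        have := wdig_le (d (m + 2))
        simp only [dig]
        nlinarith [pow5_pos m]
      have h3 : gval (m + 1) d < 6 * 5 ^ m := by simpa using ih
      show gval (m + 1) d + dig (m + 2) (d (m + 2)) < 6 * 5 ^ (m + 1)
      have h2 : (6 : ℕ) * 5 ^ (m + 1) = 30 * 5 ^ m := by rw [pow_succ]; ring
      omega

lemma digit_cancel {M A B u v : ℕ} (hM : 0 < M) (hA : A < M) (hB : B < M)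
    (h : A + M * u = B + M * v) : u = v ∧ A = B := by
  have h1 : (A + M * u) / M = u := by
    rw [Nat.add_mul_div_left _ _ hM, Nat.div_eq_of_lt hA, Nat.zero_add]
  have h2 : (B + M * v) / M = v := by
    rw [Nat.add_mul_div_left _ _ hM, Nat.div_eq_of_lt hB, Nat.zero_add]
  have huv : u = v := by rw [← h1, ← h2, h]
  constructor
  · exact huv
  · subst huv; omega

lemma wdig_inj {a b : ℕ} (ha : a < 4) (hb : b < 4) (h : wdig a = wdig b) : a = b := by
  interval_cases a <;> interval_cases b <;> simp_all [wdig]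

lemma dig1_inj {a b : ℕ} (ha : a < 4) (hb : b < 4) (h : dig 1 a = dig 1 b) : a = b := by
  interval_cases a <;> interval_cases b <;> simp_all [dig]

lemma gval_inj (n : ℕ) (d e : ℕ → ℕ) (hd : ∀ k, d k < 4) (he : ∀ k, e k < 4)
    (h : gval n d = gval n e) : ∀ k, 1 ≤ k → k ≤ n → d k = e k := by
  induction n with
  | zero => intro k h1 h2; omega
  | succ m ih =>
    intro k h1 h2
    rw [gval_succ, gval_succ] at h
    rcases m with _ | m
    · have hk : k = 1 := by omega
      subst hk
      have h0 : gval 0 d = 0 := by simp [gval]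
      have h0' : gval 0 e = 0 := by simp [gval]
      rw [h0, h0'] at h
      exact dig1_inj (hd 1) (he 1) (by simpa using h)
    · have hM : 0 < 6 * 5 ^ m := by positivity
      have hA : gval (m + 1) d < 6 * 5 ^ m := by simpa using gval_lt (m + 1) d
      have hB : gval (m + 1) e < 6 * 5 ^ m := by simpa using gval_lt (m + 1) e
      have h' : gval (m + 1) d + 6 * 5 ^ m * wdig (d (m + 2))
          = gval (m + 1) e + 6 * 5 ^ m * wdig (e (m + 2)) := by
        simpa [dig] using h
      obtain ⟨hw, hrest⟩ := digit_cancel hM hA hB h'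
      rcases Nat.lt_or_ge k (m + 2) with hk | hk
      · exact ih hrest k h1 (by omega)
      · have hk2 : k = m + 2 := by omega
        subst hk2
        exact wdig_inj (hd _) (he _) hw

/-- extend a Fin-indexed digit string to ℕ -/
def extd (n : ℕ) (D : Fin n → Fin 4) (k : ℕ) : ℕ :=
  if h : k - 1 < n then (D ⟨k - 1, h⟩ : ℕ) else 0

lemma extd_lt4 (n : ℕ) (D : Fin n → Fin 4) (k : ℕ) : extd n D k < 4 := by
  unfold extd
  split
  · exact (D _).isLt
  · norm_num

/-- For every `n ≥ 1`, the set `I_n` of values of legal choices on bins `1,…,n`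
(including the empty choice, of value `0`) has exactly `4^n` elements. -/
theorem gnary_card_values (n : ℕ) (hn : 1 ≤ n) :
    {v : ℕ | ∃ c : ℕ → Finset ℕ, (∀ k, c k ⊆ gbin k) ∧
      (∀ k, (c k).card = 0 ∨ (c k).card = 2) ∧
      v = ∑ k ∈ Finset.Icc 1 n, ∑ x ∈ c k, x}.ncard = 4 ^ n := by
  classical
  set g : (Fin n → Fin 4) → ℕ := fun D => gval n (extd n D) with hg
  have hginj : Function.Injective g := by
    intro D E hDE
    funext i
    have hext := gval_inj n (extd n D) (extd n E) (extd_lt4 n D) (extd_lt4 n E) hDE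
      (i.val + 1) (by omega) (by omega)
    have hDi : extd n D (i.val + 1) = (D i : ℕ) := by
      simp only [extd, Nat.add_sub_cancel]
      rw [dif_pos i.isLt]
    have hEi : extd n E (i.val + 1) = (E i : ℕ) := by
      simp only [extd, Nat.add_sub_cancel]
      rw [dif_pos i.isLt]
    exact Fin.ext (by rw [← hDi, ← hEi, hext])
  have hset : {v : ℕ | ∃ c : ℕ → Finset ℕ, (∀ k, c k ⊆ gbin k) ∧
      (∀ k, (c k).card = 0 ∨ (c k).card = 2) ∧
      v = ∑ k ∈ Finset.Icc 1 n, ∑ x ∈ c k, x}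
      = ↑(Finset.image g Finset.univ) := by
    ext v
    simp only [Set.mem_setOf_eq, Finset.coe_image, Finset.coe_univ, Set.image_univ,
      Set.mem_range]
    constructor
    · rintro ⟨c, hsub, hcard, rfl⟩
      choose f hf1 hf2 using fun k => sum_eq_dig k (c k) (hsub k) (hcard k)
      refine ⟨fun i => ⟨f (i.val + 1), hf1 _⟩, ?_⟩
      simp only [hg, gval]
      refine (Finset.sum_congr rfl ?_).symm
      intro k hk
      simp only [Finset.mem_Icc] at hk
      have hkn : k - 1 < n := by omega
      rw [hf2 k]
      congr 1
      simp only [extd, dif_pos hkn]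
      congr 1
      omega
    · rintro ⟨D, rfl⟩
      refine ⟨fun k => if 1 ≤ k ∧ k ≤ n then chs k (extd n D k) else ∅, ?_, ?_, ?_⟩
      · intro k
        dsimp only
        split
        · exact chs_subset _ _
        · simp
      · intro k
        dsimp only
        split
        · exact chs_card _ _
        · simp
      · simp only [hg, gval]
        refine Finset.sum_congr rfl ?_
        intro k hk
        simp only [Finset.mem_Icc] at hk
        rw [if_pos ⟨hk.1, hk.2⟩, chs_sum]
  rw [hset, Set.ncard_coe_finset, Finset.card_image_of_injective _ hginj]
  simp [Fintype.card_fun]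
end
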